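/- For the complement of the ladder graph, LG_n^C, with n ≥ 4, the signed Roman domination number satisfies γ_SR(LG_n^C) = 2. -/
import Mathlib


open scoped Classical
open Finset SimpleGraph

/-- A signed Roman dominating function on `G`: values in {-1,1,2}, every closed
neighborhood sums to at least 1, and every vertex valued -1 has a neighbor valued 2. -/
def IsSRDF {V : Type*} [Fintype V] (G : SimpleGraph V) (f : V → ℤ) : Prop :=
  (∀ v, f v = -1 ∨ f v = 1 ∨ f v = 2) ∧
  (∀ u, 1 ≤ f u + ∑ v ∈ Finset.univ.filter (G.Adj u), f v) ∧
  (∀ u, f u = -1 → ∃ v, G.Adj u v ∧ f v = 2)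

/-- The signed Roman domination number: minimum weight of an SRDF. -/
noncomputable def gammaSR {V : Type*} [Fintype V] (G : SimpleGraph V) : ℤ :=
  sInf {w | ∃ f, IsSRDF G f ∧ ∑ v, f v = w}

/-- The ladder graph `P₂ □ Pₙ`. -/
def ladderGraph (n : ℕ) : SimpleGraph (Fin 2 × Fin n) :=
  (SimpleGraph.pathGraph 2).boxProd (SimpleGraph.pathGraph n)

/-- The circular ladder graph `P₂ □ Cₙ`. -/
def circLadder (n : ℕ) : SimpleGraph (Fin 2 × Fin n) :=
  (SimpleGraph.pathGraph 2).boxProd (SimpleGraph.cycleGraph n)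

/- ### Auxiliary material for the proof -/

attribute [-instance] SimpleGraph.Compl.adjDecidable

lemma ladder_adj {n : ℕ} (u v : Fin 2 × Fin n) :
    (ladderGraph n).Adj u v ↔
      ((u.1.val + 1 = v.1.val ∨ v.1.val + 1 = u.1.val) ∧ u.2.val = v.2.val) ∨
      (u.1.val = v.1.val ∧ (u.2.val + 1 = v.2.val ∨ v.2.val + 1 = u.2.val)) := by
  rw [ladderGraph, SimpleGraph.boxProd_adj, pathGraph_adj, pathGraph_adj,
    Fin.ext_iff, Fin.ext_iff]
  tauto

lemma comp_sum {V : Type*} [Fintype V] (G : SimpleGraph V) (f : V → ℤ) (u : V) :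
    f u + ∑ v ∈ Finset.univ.filter (Gᶜ.Adj u), f v
      = (∑ v, f v) - ∑ v ∈ Finset.univ.filter (G.Adj u), f v := by
  have h1 : (Finset.univ.filter (fun v => ¬ G.Adj u v)) =
      insert u (Finset.univ.filter (Gᶜ.Adj u)) := by
    ext v
    simp only [mem_filter, mem_univ, true_and, mem_insert, SimpleGraph.compl_adj]
    constructor
    · intro h
      by_cases hv : v = u
      · exact Or.inl hv
      · exact Or.inr ⟨fun h' => hv h'.symm, h⟩
    · rintro (rfl | ⟨_, h⟩)
      · exact fun h => G.irrefl h
      · exact h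
  have h2 : u ∉ Finset.univ.filter (Gᶜ.Adj u) := by
    simp [SimpleGraph.compl_adj]
  have h3 := Finset.sum_filter_add_sum_filter_not Finset.univ (G.Adj u) f
  rw [h1, Finset.sum_insert h2] at h3
  linarith

lemma nbr_mid {n : ℕ} (f : Fin 2 × Fin n → ℤ) (i i' j : ℕ) (hi : i < 2) (hi' : i' < 2)
    (hii : i + i' = 1) (h1 : 1 ≤ j) (h2 : j + 1 < n) :
    ∑ v ∈ Finset.univ.filter ((ladderGraph n).Adj (⟨i, hi⟩, ⟨j, by omega⟩)), f v
      = f (⟨i', hi'⟩, ⟨j, by omega⟩) + f (⟨i, hi⟩, ⟨j - 1, by omega⟩)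
        + f (⟨i, hi⟩, ⟨j + 1, h2⟩) := by
  have hset : Finset.univ.filter ((ladderGraph n).Adj (⟨i, hi⟩, ⟨j, by omega⟩)) =
      {(⟨i', hi'⟩, ⟨j, by omega⟩), (⟨i, hi⟩, ⟨j - 1, by omega⟩), (⟨i, hi⟩, ⟨j + 1, h2⟩)} := by
    ext ⟨a, b⟩
    simp only [mem_filter, mem_univ, true_and, ladder_adj, mem_insert, mem_singleton,
      Prod.mk.injEq, Fin.ext_iff]
    have ha := a.isLt; have hb := b.isLt
    omega
  have hne1 : ((⟨i', hi'⟩, ⟨j, by omega⟩) : Fin 2 × Fin n) ∉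
      ({(⟨i, hi⟩, ⟨j - 1, by omega⟩), (⟨i, hi⟩, ⟨j + 1, h2⟩)} : Finset (Fin 2 × Fin n)) := by
    simp only [mem_insert, mem_singleton, Prod.mk.injEq, Fin.ext_iff]
    omega
  have hne2 : ((⟨i, hi⟩, ⟨j - 1, by omega⟩) : Fin 2 × Fin n) ∉
      ({(⟨i, hi⟩, ⟨j + 1, h2⟩)} : Finset (Fin 2 × Fin n)) := by
    simp only [mem_singleton, Prod.mk.injEq, Fin.ext_iff]
    omega
  rw [hset, Finset.sum_insert hne1, Finset.sum_insert hne2, Finset.sum_singleton, add_assoc]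

lemma nbr_left {n : ℕ} (f : Fin 2 × Fin n → ℤ) (i i' : ℕ) (hi : i < 2) (hi' : i' < 2)
    (hii : i + i' = 1) (hn : 2 ≤ n) :
    ∑ v ∈ Finset.univ.filter ((ladderGraph n).Adj (⟨i, hi⟩, ⟨0, by omega⟩)), f v
      = f (⟨i', hi'⟩, ⟨0, by omega⟩) + f (⟨i, hi⟩, ⟨1, by omega⟩) := by
  have hset : Finset.univ.filter ((ladderGraph n).Adj (⟨i, hi⟩, ⟨0, by omega⟩)) =
      {(⟨i', hi'⟩, ⟨0, by omega⟩), (⟨i, hi⟩, ⟨1, by omega⟩)} := by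
    ext ⟨a, b⟩
    simp only [mem_filter, mem_univ, true_and, ladder_adj, mem_insert, mem_singleton,
      Prod.mk.injEq, Fin.ext_iff]
    have ha := a.isLt; have hb := b.isLt
    omega
  have hne1 : ((⟨i', hi'⟩, ⟨0, by omega⟩) : Fin 2 × Fin n) ∉
      ({(⟨i, hi⟩, ⟨1, by omega⟩)} : Finset (Fin 2 × Fin n)) := by
    simp only [mem_singleton, Prod.mk.injEq, Fin.ext_iff]
    omega
  rw [hset, Finset.sum_insert hne1, Finset.sum_singleton]

lemma nbr_right {n : ℕ} (f : Fin 2 × Fin n → ℤ) (i i' : ℕ) (hi : i < 2) (hi' : i' < 2)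
    (hii : i + i' = 1) (hn : 2 ≤ n) :
    ∑ v ∈ Finset.univ.filter ((ladderGraph n).Adj (⟨i, hi⟩, ⟨n - 1, by omega⟩)), f v
      = f (⟨i', hi'⟩, ⟨n - 1, by omega⟩) + f (⟨i, hi⟩, ⟨n - 2, by omega⟩) := by
  have hset : Finset.univ.filter ((ladderGraph n).Adj (⟨i, hi⟩, ⟨n - 1, by omega⟩)) =
      {(⟨i', hi'⟩, ⟨n - 1, by omega⟩), (⟨i, hi⟩, ⟨n - 2, by omega⟩)} := by
    ext ⟨a, b⟩
    simp only [mem_filter, mem_univ, true_and, ladder_adj, mem_insert, mem_singleton,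
      Prod.mk.injEq, Fin.ext_iff]
    have ha := a.isLt; have hb := b.isLt
    omega
  have hne1 : ((⟨i', hi'⟩, ⟨n - 1, by omega⟩) : Fin 2 × Fin n) ∉
      ({(⟨i, hi⟩, ⟨n - 2, by omega⟩)} : Finset (Fin 2 × Fin n)) := by
    simp only [mem_singleton, Prod.mk.injEq, Fin.ext_iff]
    omega
  rw [hset, Finset.sum_insert hne1, Finset.sum_singleton]

lemma sum_eval {n : ℕ} (f : Fin 2 × Fin n → ℤ) :
    (∑ v : Fin 2 × Fin n, f v)
      = ∑ j ∈ Finset.range n,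
          (if h : j < n then
            f (⟨0, by omega⟩, ⟨j, h⟩) + f (⟨1, by omega⟩, ⟨j, h⟩) else 0) := by
  rw [Fintype.sum_prod_type_right]
  rw [← Fin.sum_univ_eq_sum_range
    (fun j => if h : j < n then f (⟨0, by omega⟩, ⟨j, h⟩) + f (⟨1, by omega⟩, ⟨j, h⟩) else 0) n]
  refine Finset.sum_congr rfl (fun j _ => ?_)
  rw [dif_pos j.isLt, Fin.sum_univ_two]
  rfl

lemma lower_bound {n : ℕ} (hn : 4 ≤ n) (f : Fin 2 × Fin n → ℤ)
    (hf : IsSRDF (ladderGraph n)ᶜ f) : 2 ≤ ∑ v, f v := by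
  set w : ℤ := ∑ v, f v with hw
  have key : ∀ u, ∑ v ∈ Finset.univ.filter ((ladderGraph n).Adj u), f v ≤ w - 1 := by
    intro u
    have h := hf.2.1 u
    have h2 := comp_sum (ladderGraph n) f u
    rw [h2] at h
    linarith
  set c : ℕ → ℤ := fun j =>
    if h : j < n then f (⟨0, by omega⟩, ⟨j, h⟩) + f (⟨1, by omega⟩, ⟨j, h⟩) else 0 with hc
  set D : ℤ := w - 1 with hD
  have ceval : ∀ (j : ℕ) (h : j < n), c j = f (⟨0, by omega⟩, ⟨j, h⟩) + f (⟨1, by omega⟩, ⟨j, h⟩) := by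
    intro j h
    simp only [hc]
    rw [dif_pos h]
  -- triple inequality
  have triple : ∀ j : ℕ, 1 ≤ j → j + 1 < n → c (j - 1) + c j + c (j + 1) ≤ 2 * D := by
    intro j h1 h2
    have k0 := key (⟨0, by omega⟩, ⟨j, by omega⟩)
    have k1 := key (⟨1, by omega⟩, ⟨j, by omega⟩)
    rw [nbr_mid f 0 1 j (by omega) (by omega) (by omega) h1 h2] at k0
    rw [nbr_mid f 1 0 j (by omega) (by omega) (by omega) h1 h2] at k1
    linarith [k0, k1, ceval (j - 1) (by omega : j - 1 < n), ceval j (by omega : j < n),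
      ceval (j + 1) (by omega : j + 1 < n)]
  have pairL : c 0 + c 1 ≤ 2 * D := by
    have k0 := key (⟨0, by omega⟩, ⟨0, by omega⟩)
    have k1 := key (⟨1, by omega⟩, ⟨0, by omega⟩)
    rw [nbr_left f 0 1 (by omega) (by omega) (by omega) (by omega)] at k0
    rw [nbr_left f 1 0 (by omega) (by omega) (by omega) (by omega)] at k1
    linarith [k0, k1, ceval 0 (by omega : 0 < n), ceval 1 (by omega : 1 < n)]
  have pairR : c (n - 2) + c (n - 1) ≤ 2 * D := by
    have k0 := key (⟨0, by omega⟩, ⟨n - 1, by omega⟩)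
    have k1 := key (⟨1, by omega⟩, ⟨n - 1, by omega⟩)
    rw [nbr_right f 0 1 (by omega) (by omega) (by omega) (by omega)] at k0
    rw [nbr_right f 1 0 (by omega) (by omega) (by omega) (by omega)] at k1
    linarith [k0, k1, ceval (n - 2) (by omega : n - 2 < n), ceval (n - 1) (by omega : n - 1 < n)]
  have main : ∀ m, m % 3 ≠ 0 → m ≤ n - 1 →
      ∑ j ∈ Finset.range (m + 1), c j ≤ 2 * (((m + 2) / 3 : ℕ) : ℤ) * D := by
    intro m
    induction m using Nat.strong_induction_on with
    | _ m ih =>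
      intro hm hmn
      rcases lt_or_ge m 4 with h4 | h4
      · interval_cases m
        · omega
        · have : ((((1:ℕ) + 2) / 3 : ℕ) : ℤ) = 1 := by norm_num
          rw [this]
          rw [Finset.sum_range_succ, Finset.sum_range_succ, Finset.sum_range_zero]
          linarith
        · have : ((((2:ℕ) + 2) / 3 : ℕ) : ℤ) = 1 := by norm_num
          rw [this]
          rw [Finset.sum_range_succ, Finset.sum_range_succ, Finset.sum_range_succ,
            Finset.sum_range_zero]
          have := triple 1 le_rfl (by omega)
          simpa using this.trans (by linarith)
        · omega
      · obtain ⟨k, rfl⟩ : ∃ k, m = k + 3 := ⟨m - 3, by omega⟩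
        have hrec := ih k (by omega) (by omega) (by omega)
        have htr := triple (k + 2) (by omega) (by omega)
        have hsplit : ∑ j ∈ Finset.range (k + 3 + 1), c j
            = (∑ j ∈ Finset.range (k + 1), c j) + (c (k + 1) + c (k + 2) + c (k + 3)) := by
          rw [Finset.sum_range_succ, Finset.sum_range_succ, Finset.sum_range_succ]
          ring
        have hco : (((k + 3 + 2) / 3 : ℕ) : ℤ) = (((k + 2) / 3 : ℕ) : ℤ) + 1 := by
          have : (k + 3 + 2) / 3 = (k + 2) / 3 + 1 := by omega
          rw [this]; push_cast; ring
        rw [hsplit, hco]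
        have : c (k + 1) + c (k + 2) + c (k + 3) ≤ 2 * D := by
          have h' : k + 2 - 1 = k + 1 := by omega
          rw [h'] at htr
          linarith
        linarith
  have wsum : w = ∑ j ∈ Finset.range n, c j := sum_eval f
  by_contra hcon
  push_neg at hcon
  have hD0 : D ≤ 0 := by omega
  have final : ∃ K : ℕ, 2 ≤ K ∧ w ≤ 2 * (K : ℤ) * D := by
    by_cases h1 : n % 3 = 1
    · obtain ⟨a, rfl⟩ : ∃ a, n = a + 3 := ⟨n - 3, by omega⟩
      refine ⟨(a + 2) / 3 + 1, by omega, ?_⟩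
      have hm := main a (by omega) (by omega)
      have hsplit : ∑ j ∈ Finset.range (a + 3), c j
          = (∑ j ∈ Finset.range (a + 1), c j) + (c (a + 1) + c (a + 2)) := by
        rw [show a + 3 = (a + 2) + 1 by ring, Finset.sum_range_succ,
          show a + 2 = (a + 1) + 1 by ring, Finset.sum_range_succ]
        ring
      have hpr : c (a + 1) + c (a + 2) ≤ 2 * D := by
        have e1 : a + 3 - 2 = a + 1 := by omega
        have e2 : a + 3 - 1 = a + 2 := by omega
        rw [e1, e2] at pairR
        exact pairR
      have hcast : ((((a + 2) / 3 + 1 : ℕ)) : ℤ) = (((a + 2) / 3 : ℕ) : ℤ) + 1 := by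
        push_cast
        ring
      rw [wsum, hsplit, hcast]
      linarith
    · refine ⟨(n - 1 + 2) / 3, by omega, ?_⟩
      have hm := main (n - 1) (by omega) (by omega)
      have h2 : n - 1 + 1 = n := by omega
      rw [h2] at hm
      rw [wsum]
      exact hm
  obtain ⟨K, hK2, hKw⟩ := final
  have hK2' : (2 : ℤ) ≤ (K : ℤ) := by exact_mod_cast hK2
  have : 2 * (K : ℤ) * D ≤ 4 * D := by nlinarith
  omega

/-- value pattern for `n ≠ 5` -/
def Fgen : ℕ → ℕ → ℤ := fun i j =>
  if j = 0 then 2 else if j ≤ 2 then -1 else if j = 3 then 1 else if i = 0 then -1 else 1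

lemma Fgen_ge4 (i j : ℕ) (h : 4 ≤ j) : Fgen i j = if i = 0 then -1 else 1 := by
  unfold Fgen
  rw [if_neg (by omega), if_neg (by omega), if_neg (by omega)]

lemma Fgen_vals (i j : ℕ) : Fgen i j = -1 ∨ Fgen i j = 1 ∨ Fgen i j = 2 := by
  unfold Fgen
  split_ifs <;> norm_num

/-- value pattern for `n = 5` -/
def F5 : ℕ → ℕ → ℤ := fun _ j => if j = 0 ∨ j = 4 then 2 else -1

lemma upper_gen {n : ℕ} (hn : 4 ≤ n) (hn5 : n ≠ 5) :
    ∃ f : Fin 2 × Fin n → ℤ, IsSRDF (ladderGraph n)ᶜ f ∧ ∑ v, f v = 2 := by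
  set f : Fin 2 × Fin n → ℤ := fun v => Fgen v.1.val v.2.val with hfdef
  have hfeval : ∀ (i j : ℕ) (hi : i < 2) (hj : j < n),
      f (⟨i, hi⟩, ⟨j, hj⟩) = Fgen i j := fun _ _ _ _ => rfl
  have hsum : ∑ v, f v = 2 := by
    rw [sum_eval f]
    have hzero : ∀ x ∈ Finset.range n, x ∉ Finset.range 4 →
        (if h : x < n then f (⟨0, by omega⟩, ⟨x, h⟩) + f (⟨1, by omega⟩, ⟨x, h⟩) else 0) = 0 := by
      intro x hx hx4
      simp only [Finset.mem_range] at hx hx4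
      rw [dif_pos hx, hfeval, hfeval, Fgen_ge4 0 x (by omega), Fgen_ge4 1 x (by omega)]
      norm_num
    rw [← Finset.sum_subset (Finset.range_subset_range.2 (by omega : 4 ≤ n)) hzero]
    rw [Finset.sum_range_succ, Finset.sum_range_succ, Finset.sum_range_succ,
      Finset.sum_range_succ, Finset.sum_range_zero]
    rw [dif_pos (by omega : 0 < n), dif_pos (by omega : 1 < n), dif_pos (by omega : 2 < n),
      dif_pos (by omega : 3 < n)]
    simp only [hfeval]
    norm_num [Fgen]
  refine ⟨f, ⟨?_, ?_, ?_⟩, hsum⟩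
  · rintro ⟨⟨i, hi⟩, ⟨j, hj⟩⟩
    exact Fgen_vals i j
  · rintro ⟨⟨i, hi⟩, ⟨j, hj⟩⟩
    rw [comp_sum (ladderGraph n) f, hsum]
    have hnb : ∑ v ∈ Finset.univ.filter
        ((ladderGraph n).Adj (⟨i, hi⟩, ⟨j, hj⟩)), f v ≤ 1 := by
      rcases (by omega : j = 0 ∨ (1 ≤ j ∧ j + 1 < n) ∨ j = n - 1) with h0 | hmid | hlast
      · subst h0
        rw [nbr_left f i (1 - i) hi (by omega) (by omega) (by omega)]
        rw [hfeval, hfeval]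
        norm_num [Fgen]
      · obtain ⟨h1, h2⟩ := hmid
        rw [nbr_mid f i (1 - i) j hi (by omega) (by omega) h1 h2]
        rw [hfeval, hfeval, hfeval]
        rcases (by omega : j = 1 ∨ j = 2 ∨ j = 3 ∨ j = 4 ∨ 5 ≤ j) with h | h | h | h | h
        · subst h; norm_num [Fgen]
        · subst h; norm_num [Fgen]
        · subst h
          rw [Fgen_ge4 i 4 (by omega)]
          rcases (by omega : i = 0 ∨ i = 1) with rfl | rfl <;> norm_num [Fgen]
        · subst h
          rw [Fgen_ge4 (1 - i) 4 (by omega), Fgen_ge4 i 5 (by omega)]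
          rcases (by omega : i = 0 ∨ i = 1) with rfl | rfl <;> norm_num [Fgen]
        · rw [Fgen_ge4 (1 - i) j (by omega), Fgen_ge4 i (j - 1) (by omega),
            Fgen_ge4 i (j + 1) (by omega)]
          rcases (by omega : i = 0 ∨ i = 1) with rfl | rfl <;> norm_num
      · subst hlast
        rw [nbr_right f i (1 - i) hi (by omega) (by omega) (by omega)]
        rw [hfeval, hfeval]
        rcases (by omega : n = 4 ∨ 6 ≤ n) with h4 | h6
        · rw [h4]
          norm_num [Fgen]
        · rw [Fgen_ge4 (1 - i) (n - 1) (by omega), Fgen_ge4 i (n - 2) (by omega)]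
          rcases (by omega : i = 0 ∨ i = 1) with rfl | rfl <;> norm_num
    linarith
  · rintro ⟨⟨i, hi⟩, ⟨j, hj⟩⟩ hu
    have hj0 : j ≠ 0 := by
      intro h
      subst h
      rw [hfeval] at hu
      norm_num [Fgen] at hu
    refine ⟨(⟨1 - i, by omega⟩, ⟨0, by omega⟩), ?_, by rw [hfeval]; norm_num [Fgen]⟩
    rw [SimpleGraph.compl_adj]
    constructor
    · simp only [ne_eq, Prod.mk.injEq, Fin.mk.injEq, not_and]
      intro h
      omega
    · rw [ladder_adj]
      simp only
      omega

lemma upper_5 :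
    ∃ f : Fin 2 × Fin 5 → ℤ, IsSRDF (ladderGraph 5)ᶜ f ∧ ∑ v, f v = 2 := by
  set f : Fin 2 × Fin 5 → ℤ := fun v => F5 v.1.val v.2.val with hfdef
  have hfeval : ∀ (i j : ℕ) (hi : i < 2) (hj : j < 5),
      f (⟨i, hi⟩, ⟨j, hj⟩) = F5 i j := fun _ _ _ _ => rfl
  have hsum : ∑ v, f v = 2 := by
    rw [sum_eval f]
    rw [Finset.sum_range_succ, Finset.sum_range_succ, Finset.sum_range_succ,
      Finset.sum_range_succ, Finset.sum_range_succ, Finset.sum_range_zero]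
    rw [dif_pos (by omega : 0 < 5), dif_pos (by omega : 1 < 5), dif_pos (by omega : 2 < 5),
      dif_pos (by omega : 3 < 5), dif_pos (by omega : 4 < 5)]
    simp only [hfeval]
    norm_num [F5]
  refine ⟨f, ⟨?_, ?_, ?_⟩, hsum⟩
  · rintro ⟨⟨i, hi⟩, ⟨j, hj⟩⟩
    rw [hfeval]
    unfold F5
    split_ifs <;> norm_num
  · rintro ⟨⟨i, hi⟩, ⟨j, hj⟩⟩
    rw [comp_sum (ladderGraph 5) f, hsum]
    have hnb : ∑ v ∈ Finset.univ.filter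
        ((ladderGraph 5).Adj (⟨i, hi⟩, ⟨j, hj⟩)), f v ≤ 1 := by
      rcases (by omega : j = 0 ∨ j = 1 ∨ j = 2 ∨ j = 3 ∨ j = 4) with rfl | rfl | rfl | rfl | rfl
      · rw [nbr_left f i (1 - i) hi (by omega) (by omega) (by omega)]
        rw [hfeval, hfeval]
        norm_num [F5]
      · rw [nbr_mid f i (1 - i) 1 hi (by omega) (by omega) (by omega) (by omega)]
        rw [hfeval, hfeval, hfeval]
        norm_num [F5]
      · rw [nbr_mid f i (1 - i) 2 hi (by omega) (by omega) (by omega) (by omega)]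
        rw [hfeval, hfeval, hfeval]
        norm_num [F5]
      · rw [nbr_mid f i (1 - i) 3 hi (by omega) (by omega) (by omega) (by omega)]
        rw [hfeval, hfeval, hfeval]
        norm_num [F5]
      · rw [show ((⟨i, hi⟩, ⟨4, hj⟩) : Fin 2 × Fin 5) = (⟨i, hi⟩, ⟨5 - 1, by omega⟩) from rfl]
        rw [nbr_right f i (1 - i) hi (by omega) (by omega) (by omega)]
        rw [hfeval, hfeval]
        norm_num [F5]
    linarith
  · rintro ⟨⟨i, hi⟩, ⟨j, hj⟩⟩ hu
    have hj0 : j ≠ 0 ∧ j ≠ 4 := by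
      constructor <;> intro h <;> subst h <;> rw [hfeval] at hu <;> norm_num [F5] at hu
    refine ⟨(⟨1 - i, by omega⟩, ⟨0, by omega⟩), ?_, by rw [hfeval]; norm_num [F5]⟩
    rw [SimpleGraph.compl_adj]
    constructor
    · simp only [ne_eq, Prod.mk.injEq, Fin.mk.injEq, not_and]
      intro h
      omega
    · rw [ladder_adj]
      simp only
      omega

theorem stmt11 (n : ℕ) (hn : 4 ≤ n) :
    gammaSR (ladderGraph n)ᶜ = 2 := by
  have hmem : ∃ f : Fin 2 × Fin n → ℤ, IsSRDF (ladderGraph n)ᶜ f ∧ ∑ v, f v = 2 := by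
    by_cases h5 : n = 5
    · subst h5
      exact upper_5
    · exact upper_gen hn h5
  have hleast : IsLeast {w : ℤ | ∃ f, IsSRDF (ladderGraph n)ᶜ f ∧ ∑ v, f v = w} 2 := by
    constructor
    · exact hmem
    · rintro w ⟨f, hf, rfl⟩
      exact lower_bound hn f hf
  rw [gammaSR]
  exact hleast.csInf_eq
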